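/- Let c0, c1, c3 be real numbers, set c2 = c1, and define f(u) = u(1−u), g(u) = (c3−2c1+c0)u² + (2c1−2c0)u + c0, F(a,b,c,d) = a(1−b)·[(1−d)(c0(1−c) + c1·c) + d(c1(1−c) + c3·c)], D(v) = c0(1−v)² + 2c1·v(1−v) + c3·v², and D'(v) = −2c0(1−v) + 2c1(1−2v) + 2c3·v. Let ρ⁺, ρ⁻ : ℝ → ℝ be differentiable on a neighborhood of a point x and twice differentiable at x. Then lim_{h→0, h≠0} (1/h)·{ (1/h)·[ F(ρ⁺(x), ρ⁺(x+h), ρ⁻(x), ρ⁻(x+h)) − F(ρ⁺(x−h), ρ⁺(x), ρ⁻(x−h), ρ⁻(x)) ] − [ f'(ρ⁺(x))g(ρ⁻(x))(ρ⁺)'(x) + f(ρ⁺(x))g'(ρ⁻(x))(ρ⁻)'(x) ] } = −(1/2)·[ D(ρ⁻(x))·(ρ⁺)''(x) + D'(ρ⁻(x))·(ρ⁻)'(x)·(ρ⁺)'(x) ]. That is, the next-order term in the small-cell-size expansion of the mesoscopic flux difference is the nonlinear diffusion −(h/2)·∂ₓ( D(ρ⁻) ∂ₓρ⁺ ). -/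

import Mathlib

/-!
Expand `ρ(x ± h) = ρ(x) ± h ρ'(x) + h² R(±h)` with `R` continuous at `0` and `R 0 = ρ''(x)/2`;
by L'Hôpital this needs `ρ''` only at `x`. Since `c2 = c1`, the velocity factor of the flux is
symmetric and affine in each of its two arguments, with diagonal `D = g`. Hence the flux
difference is, exactly, `h` times the convective term plus `h²` times a polynomial in `h` and
the remainders, whose value at `h = 0` is the diffusion term.
-/

open Filter Topology

/-- Discrete flux of right-moving pedestrians of the mesoscopic model with
slowdown velocities `c0, c1, c2 = c1, c3`. -/
noncomputable def pedFluxSym (c0 c1 c3 a b c d : ℝ) : ℝ :=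
  a * (1 - b) * ((1 - d) * (c0 * (1 - c) + c1 * c) + d * (c1 * (1 - c) + c3 * c))

/-- `f(u) = u(1−u)`, the density factor of the macroscopic pedestrian flux. -/
noncomputable def pedF (u : ℝ) : ℝ := u * (1 - u)

/-- `g(u) = (c3−2c1+c0)u² + (2c1−2c0)u + c0`, the velocity factor of the
macroscopic pedestrian flux when `c2 = c1`. -/
noncomputable def pedGSym (c0 c1 c3 u : ℝ) : ℝ :=
  (c3 - 2 * c1 + c0) * u ^ 2 + (2 * c1 - 2 * c0) * u + c0

/-- `D(v) = c0(1−v)² + 2c1·v(1−v) + c3·v²`, the nonlinear diffusion coefficient. -/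
noncomputable def pedD (c0 c1 c3 v : ℝ) : ℝ :=
  c0 * (1 - v) ^ 2 + 2 * c1 * v * (1 - v) + c3 * v ^ 2

/-- `D'(v) = −2c0(1−v) + 2c1(1−2v) + 2c3·v`, the derivative of the diffusion
coefficient. -/
noncomputable def pedD' (c0 c1 c3 v : ℝ) : ℝ :=
  -2 * c0 * (1 - v) + 2 * c1 * (1 - 2 * v) + 2 * c3 * v

lemma tendsto_taylor_remainder_div_sq {u du : ℝ → ℝ} {x d2 : ℝ}
    (hu : ∀ᶠ y in 𝓝 x, HasDerivAt u (du y) y) (hdu : HasDerivAt du d2 x) :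
    Tendsto (fun h ↦ (u (x + h) - u x - h * du x) / h ^ 2) (𝓝[≠] 0) (𝓝 (d2 / 2)) := by
  have hshift : Tendsto (fun h : ℝ ↦ x + h) (𝓝 0) (𝓝 x) := by
    simpa using (continuous_const_add x).tendsto 0
  refine HasDerivAt.lhopital_zero_nhdsNE (f' := fun h ↦ du (x + h) - du x) (g' := fun h ↦ 2 * h)
    ?_ ?_ ?_ ?_ ?_ ?_
  · filter_upwards [nhdsWithin_le_nhds (hshift.eventually hu)] with h hh
    exact ((hh.comp_const_add x h).sub_const (u x)).sub (hasDerivAt_mul_const (du x))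
  · filter_upwards with h
    simpa using hasDerivAt_pow 2 h
  · filter_upwards [self_mem_nhdsWithin] with h (hh : h ≠ 0)
    exact mul_ne_zero two_ne_zero hh
  · refine Tendsto.mono_left ?_ nhdsWithin_le_nhds
    simpa using (((hu.self_of_nhds.continuousAt.tendsto.comp hshift).sub_const (u x)).sub
      (tendsto_id.mul_const (du x)))
  · exact ((continuous_pow 2).tendsto' 0 0 (by simp)).mono_left nhdsWithin_le_nhds
  · refine ((hasDerivAt_iff_tendsto_slope_zero.mp hdu).div_const 2).congr fun h ↦ ?_
    simp only [smul_eq_mul]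
    field_simp

lemma exists_continuousAt_taylor_remainder {u du : ℝ → ℝ} {x d2 : ℝ}
    (hu : ∀ᶠ y in 𝓝 x, HasDerivAt u (du y) y) (hdu : HasDerivAt du d2 x) :
    ∃ R : ℝ → ℝ, ContinuousAt R 0 ∧ R 0 = d2 / 2 ∧
      ∀ h, u (x + h) = u x + h * du x + h ^ 2 * R h ∧
        u (x - h) = u x - h * du x + h ^ 2 * R (-h) := by
  set R := Function.update (fun h ↦ (u (x + h) - u x - h * du x) / h ^ 2) 0 (d2 / 2)
  have hforward : ∀ h, u (x + h) = u x + h * du x + h ^ 2 * R h := by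
    intro h
    rcases eq_or_ne h 0 with rfl | hh
    · simp
    · simp only [R, Function.update_of_ne hh]
      field_simp
      ring
  refine ⟨R, continuousAt_update_same.mpr (tendsto_taylor_remainder_div_sq hu hdu),
    Function.update_self .., fun h ↦ ⟨hforward h, ?_⟩⟩
  rw [sub_eq_add_neg, hforward]
  ring

/-- The `h²` coefficient of the flux difference when the cell values of `ρ⁺` are
`a`, `a + h P + h² r₁`, `a - h P + h² r₂` and those of `ρ⁻` are `c`, `c + h Q + h² s₁`,
`c - h Q + h² s₂`. -/
noncomputable def pedFluxCorrection (c0 c1 c3 a c P Q h r₁ r₂ s₁ s₂ : ℝ) : ℝ :=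
  pedF a * (pedD' c0 c1 c3 c / 2) * (s₁ - s₂) - pedD c0 c1 c3 c * (a * r₁ + (1 - a) * r₂)
    - pedD' c0 c1 c3 c / 2 *
      (a * (P + h * r₁) * (Q + h * s₁) + (1 - a) * (P - h * r₂) * (Q - h * s₂))

lemma pedGSym_eq_pedD (c0 c1 c3 : ℝ) : pedGSym c0 c1 c3 = pedD c0 c1 c3 := by
  ext u
  unfold pedGSym pedD
  ring

lemma pedFluxSym_sub_pedFluxSym (c0 c1 c3 a c P Q h r₁ r₂ s₁ s₂ : ℝ) :
    pedFluxSym c0 c1 c3 a (a + h * P + h ^ 2 * r₁) c (c + h * Q + h ^ 2 * s₁)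
      - pedFluxSym c0 c1 c3 (a - h * P + h ^ 2 * r₂) a (c - h * Q + h ^ 2 * s₂) c
      = h * ((1 - 2 * a) * pedD c0 c1 c3 c * P + pedF a * pedD' c0 c1 c3 c * Q)
        + h ^ 2 * pedFluxCorrection c0 c1 c3 a c P Q h r₁ r₂ s₁ s₂ := by
  unfold pedFluxCorrection pedFluxSym pedF pedD pedD'
  ring

lemma pedFluxSym_second_difference_eq {c0 c1 c3 a b a' c d c' P Q h r₁ r₂ s₁ s₂ : ℝ}
    (hh : h ≠ 0) (hb : b = a + h * P + h ^ 2 * r₁) (ha' : a' = a - h * P + h ^ 2 * r₂)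
    (hd : d = c + h * Q + h ^ 2 * s₁) (hc' : c' = c - h * Q + h ^ 2 * s₂) :
    ((pedFluxSym c0 c1 c3 a b c d - pedFluxSym c0 c1 c3 a' a c' c) / h
      - ((1 - 2 * a) * pedGSym c0 c1 c3 c * P
        + pedF a * (2 * (c3 - 2 * c1 + c0) * c + (2 * c1 - 2 * c0)) * Q)) / h
      = pedFluxCorrection c0 c1 c3 a c P Q h r₁ r₂ s₁ s₂ := by
  have hg' : 2 * (c3 - 2 * c1 + c0) * c + (2 * c1 - 2 * c0) = pedD' c0 c1 c3 c := by
    unfold pedD'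
    ring
  subst hb ha' hd hc'
  rw [pedFluxSym_sub_pedFluxSym, pedGSym_eq_pedD, hg']
  field_simp
  ring

lemma pedFluxCorrection_zero (c0 c1 c3 a c P Q p2 q2 : ℝ) :
    pedFluxCorrection c0 c1 c3 a c P Q 0 (p2 / 2) (p2 / 2) (q2 / 2) (q2 / 2)
      = -(1 / 2) * (pedD c0 c1 c3 c * p2 + pedD' c0 c1 c3 c * Q * P) := by
  unfold pedFluxCorrection
  ring

/-- The next-order term in the small-cell-size expansion of the mesoscopic flux
difference is the nonlinear diffusion `−(h/2)·∂ₓ(D(ρ⁻)∂ₓρ⁺)`: subtracting the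
first-order (macroscopic convective) term from the scaled flux difference and
dividing again by `h`, the limit as `h → 0` is
`−(1/2)·[D(ρ⁻(x))(ρ⁺)''(x) + D'(ρ⁻(x))(ρ⁻)'(x)(ρ⁺)'(x)]`. -/
theorem flux_difference_second_order_diffusive_correction
    (c0 c1 c3 : ℝ) (ρp ρm : ℝ → ℝ) (x : ℝ)
    (s : Set ℝ) (hs : s ∈ 𝓝 x) (dp dm : ℝ → ℝ) (dp2 dm2 : ℝ)
    (hρp : ∀ y ∈ s, HasDerivAt ρp (dp y) y)
    (hρm : ∀ y ∈ s, HasDerivAt ρm (dm y) y)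
    (hdp : HasDerivAt dp dp2 x) (hdm : HasDerivAt dm dm2 x) :
    Tendsto (fun h : ℝ =>
        ((pedFluxSym c0 c1 c3 (ρp x) (ρp (x + h)) (ρm x) (ρm (x + h))
          - pedFluxSym c0 c1 c3 (ρp (x - h)) (ρp x) (ρm (x - h)) (ρm x)) / h
         - ((1 - 2 * ρp x) * pedGSym c0 c1 c3 (ρm x) * dp x
            + pedF (ρp x) * (2 * (c3 - 2 * c1 + c0) * ρm x + (2 * c1 - 2 * c0)) * dm x)) / h)
      (𝓝[≠] (0 : ℝ))
      (𝓝 (-(1 / 2) * (pedD c0 c1 c3 (ρm x) * dp2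
          + pedD' c0 c1 c3 (ρm x) * dm x * dp x))) := by
  obtain ⟨Rp, hRp, hRp0, hρp_taylor⟩ := exists_continuousAt_taylor_remainder (eventually_of_mem hs hρp) hdp
  obtain ⟨Rm, hRm, hRm0, hρm_taylor⟩ := exists_continuousAt_taylor_remainder (eventually_of_mem hs hρm) hdm
  -- stated at `-0` so that `fun_prop` can compose them with `fun h ↦ -h`
  have hRp' : ContinuousAt Rp (-0) := by rwa [neg_zero]
  have hRm' : ContinuousAt Rm (-0) := by rwa [neg_zero]
  have hcont : ContinuousAt (fun h ↦ pedFluxCorrection c0 c1 c3 (ρp x) (ρm x) (dp x) (dm x) h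
      (Rp h) (Rp (-h)) (Rm h) (Rm (-h))) 0 := by
    unfold pedFluxCorrection
    fun_prop
  have hlim := hcont.tendsto
  simp only [neg_zero, hRp0, hRm0, pedFluxCorrection_zero] at hlim
  refine (hlim.mono_left nhdsWithin_le_nhds).congr' ?_
  filter_upwards [self_mem_nhdsWithin] with h hh
  exact (pedFluxSym_second_difference_eq hh (hρp_taylor h).1 (hρp_taylor h).2
    (hρm_taylor h).1 (hρm_taylor h).2).symm
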